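/- The hub propagation time satisfies E[n] = Θ(log(n+1)): specifically q·log(n+1) ≤ E[n] ≤ log(n+1)/log(2/(1+q)) for all n ≥ 0. -/

import Mathlib

/-!
With the binomial weights `w k = C(n,k) p^(n-k) q^k` the recurrence reads
`(1 - q^n) E n = 1 + ∑_{k<n} w k E k`, and both bounds follow by strong induction on `n`.
Upper bound: `∑_{k ≤ n} w k (k + 1) = nq + 1`, so Jensen's inequality for `log` gives
`∑_{k ≤ n} w k log (k + 1) ≤ log (nq + 1)`, and for `n ≥ 1`
`log (2/(1+q)) + log (nq + 1) ≤ log (n + 1)`.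
Lower bound: `log x ≥ 1 - 1/x` at `x = (k+1)/(n+1)` reduces it to the inverse moment
`∑_{k ≤ n} w k / (k + 1) = (1 - p^(n+1)) / ((n+1) q) ≤ 1 / ((n+1) q)`.
-/

open Finset Real

def binomWeight {R : Type*} [CommSemiring R] (p q : R) (n k : ℕ) : R :=
  n.choose k * p ^ (n - k) * q ^ k

section Algebra

variable {R : Type*} [CommSemiring R] (p q : R)

theorem sum_binomWeight (n : ℕ) :
    ∑ k ∈ range (n + 1), binomWeight p q n k = (p + q) ^ n := by
  rw [add_comm p q, add_pow]
  exact sum_congr rfl fun k _ => by unfold binomWeight; ring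

theorem binomWeight_self (n : ℕ) : binomWeight p q n n = q ^ n := by
  simp [binomWeight]

theorem binomWeight_zero_right (n : ℕ) : binomWeight p q n 0 = p ^ n := by
  simp [binomWeight]

theorem succ_mul_binomWeight_succ (n k : ℕ) :
    ((k : R) + 1) * binomWeight p q (n + 1) (k + 1) = ((n : R) + 1) * q * binomWeight p q n k := by
  have h : (((n + 1).choose (k + 1) * (k + 1) : ℕ) : R) = ((n + 1) * n.choose k : ℕ) := by
    rw [Nat.add_one_mul_choose_eq]
  push_cast at h
  calc ((k : R) + 1) * binomWeight p q (n + 1) (k + 1)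
      = ((n + 1).choose (k + 1) * ((k : R) + 1)) * (p ^ (n - k) * q ^ k * q) := by
        simp only [binomWeight, Nat.reduceSubDiff]; ring
    _ = ((n : R) + 1) * q * binomWeight p q n k := by
        rw [h, binomWeight]; ring

theorem sum_succ_mul_binomWeight (n : ℕ) :
    ∑ k ∈ range (n + 2), (k : R) * binomWeight p q (n + 1) k
      = ((n : R) + 1) * q * (p + q) ^ n := by
  rw [sum_range_succ', Nat.cast_zero, zero_mul, add_zero, ← sum_binomWeight, mul_sum]
  exact sum_congr rfl fun k _ => by rw [Nat.cast_succ, succ_mul_binomWeight_succ]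

end Algebra

theorem succ_mul_sum_binomWeight_div {K : Type*} [Field K] [CharZero K] (p q : K) (n : ℕ) :
    ((n : K) + 1) * q * ∑ k ∈ range (n + 1), binomWeight p q n k / ((k : K) + 1)
      = (p + q) ^ (n + 1) - p ^ (n + 1) := by
  rw [← sum_binomWeight p q (n + 1), sum_range_succ' _ (n + 1), binomWeight_zero_right,
    add_sub_cancel_right, mul_sum]
  refine sum_congr rfl fun k _ => ?_
  rw [mul_div_assoc', div_eq_iff (Nat.cast_add_one_ne_zero k), ← succ_mul_binomWeight_succ]
  ring

theorem binomWeight_nonneg {p q : ℝ} (hp : 0 ≤ p) (hq : 0 ≤ q) (n k : ℕ) :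
    0 ≤ binomWeight p q n k := by
  unfold binomWeight; positivity

theorem sum_binomWeight_mul_succ {p q : ℝ} (hpq : p + q = 1) (n : ℕ) :
    ∑ k ∈ range (n + 1), binomWeight p q n k * ((k : ℝ) + 1) = n * q + 1 := by
  simp only [mul_add, mul_one, sum_add_distrib, sum_binomWeight, hpq, one_pow, add_left_inj]
  rcases n with _ | n
  · simp
  · simpa [hpq, mul_comm] using sum_succ_mul_binomWeight p q n

theorem sum_binomWeight_mul_log_succ_le {p q : ℝ} (hp : 0 ≤ p) (hq : 0 ≤ q)
    (hpq : p + q = 1) (n : ℕ) :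
    ∑ k ∈ range (n + 1), binomWeight p q n k * log ((k : ℝ) + 1) ≤ log (n * q + 1) := by
  have h := strictConcaveOn_log_Ioi.concaveOn.le_map_sum (t := range (n + 1))
    (w := binomWeight p q n) (p := fun k : ℕ => (k : ℝ) + 1)
    (fun k _ => binomWeight_nonneg hp hq n k) (by rw [sum_binomWeight, hpq, one_pow])
    (fun k _ => Set.mem_Ioi.2 (by positivity))
  simpa only [smul_eq_mul, sum_binomWeight_mul_succ hpq] using h

theorem succ_mul_sum_binomWeight_div_le {p q : ℝ} (hp : 0 ≤ p) (hq : 0 < q) (hpq : p + q = 1)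
    (n : ℕ) :
    ((n : ℝ) + 1) * ∑ k ∈ range (n + 1), binomWeight p q n k / ((k : ℝ) + 1)
      ≤ q⁻¹ := by
  have h := succ_mul_sum_binomWeight_div p q n
  rw [hpq, one_pow] at h
  rw [← one_div, le_div_iff₀ hq, mul_right_comm, h]
  linarith [pow_nonneg hp (n + 1)]

theorem log_succ_add_one_sub_inv_le {p q : ℝ} (hp : 0 ≤ p) (hq : 0 < q) (hpq : p + q = 1)
    (n : ℕ) :
    log ((n : ℝ) + 1) + 1 - q⁻¹
      ≤ ∑ k ∈ range (n + 1), binomWeight p q n k * log ((k : ℝ) + 1) := by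
  set c := log ((n : ℝ) + 1)
  have hpoint (k : ℕ) : c + 1 - ((n : ℝ) + 1) / ((k : ℝ) + 1) ≤ log ((k : ℝ) + 1) := by
    have h := one_sub_inv_le_log_of_pos (x := ((k : ℝ) + 1) / ((n : ℝ) + 1)) (by positivity)
    rw [log_div (by positivity) (by positivity), inv_div] at h
    linarith
  calc c + 1 - q⁻¹
      ≤ (c + 1) * ∑ k ∈ range (n + 1), binomWeight p q n k
          - ((n : ℝ) + 1) * ∑ k ∈ range (n + 1), binomWeight p q n k / ((k : ℝ) + 1) := by
        rw [sum_binomWeight, hpq, one_pow]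
        linarith [succ_mul_sum_binomWeight_div_le hp hq hpq n]
    _ = ∑ k ∈ range (n + 1),
          binomWeight p q n k * (c + 1 - ((n : ℝ) + 1) / ((k : ℝ) + 1)) := by
        rw [mul_sum, mul_sum, ← sum_sub_distrib]
        exact sum_congr rfl fun k _ => by ring
    _ ≤ _ := sum_le_sum fun k _ =>
        mul_le_mul_of_nonneg_left (hpoint k) (binomWeight_nonneg hp hq.le n k)

theorem log_two_div_one_add_add_log_le {q x : ℝ} (hq0 : 0 ≤ q) (hq1 : q ≤ 1) (hx : 1 ≤ x) :
    log (2 / (1 + q)) + log (x * q + 1) ≤ log (x + 1) := by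
  rw [← log_mul (by positivity) (by positivity)]
  apply log_le_log (by positivity)
  rw [div_mul_eq_mul_div, div_le_iff₀ (by positivity)]
  nlinarith [mul_nonneg (sub_nonneg.2 hx) (sub_nonneg.2 hq1)]

section Recurrence

variable {p q : ℝ} {E : ℕ → ℝ}

theorem mul_log_succ_le_of_rec (hp : 0 ≤ p) (hq0 : 0 < q) (hq1 : q < 1) (hpq : p + q = 1)
    (hE0 : E 0 = 0)
    (hrec : ∀ n : ℕ, 1 ≤ n →
      (1 - q ^ n) * E n = 1 + ∑ k ∈ range n, binomWeight p q n k * E k)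
    (n : ℕ) : q * log ((n : ℝ) + 1) ≤ E n := by
  induction n using Nat.strong_induction_on with
  | _ n ih =>
  rcases Nat.eq_zero_or_pos n with rfl | hn
  · simp [hE0]
  have hprev : q * ∑ k ∈ range n, binomWeight p q n k * log ((k : ℝ) + 1)
      ≤ ∑ k ∈ range n, binomWeight p q n k * E k := by
    rw [mul_sum]
    refine sum_le_sum fun k hk => ?_
    have := mul_le_mul_of_nonneg_left (ih k (mem_range.1 hk)) (binomWeight_nonneg hp hq0.le n k)
    linarith
  have hfull := mul_le_mul_of_nonneg_left (log_succ_add_one_sub_inv_le hp hq0 hpq n) hq0.le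
  rw [sum_range_succ, binomWeight_self] at hfull
  have hcancel : q * q⁻¹ = 1 := mul_inv_cancel₀ hq0.ne'
  have hgap : 0 < 1 - q ^ n := sub_pos.2 (pow_lt_one₀ hq0.le hq1 hn.ne')
  refine le_of_mul_le_mul_left ?_ hgap
  rw [hrec n hn]
  linarith

theorem le_log_succ_div_of_rec (hp : 0 < p) (hq : 0 ≤ q) (hpq : p + q = 1) (hE0 : E 0 = 0)
    (hrec : ∀ n : ℕ, 1 ≤ n →
      (1 - q ^ n) * E n = 1 + ∑ k ∈ range n, binomWeight p q n k * E k)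
    (n : ℕ) : E n ≤ log ((n : ℝ) + 1) / log (2 / (1 + q)) := by
  have hq1 : q < 1 := by linarith
  set L := log (2 / (1 + q))
  have hL : 0 < L := log_pos (by rw [lt_div_iff₀ (by linarith)]; linarith)
  induction n using Nat.strong_induction_on with
  | _ n ih =>
  rw [le_div_iff₀ hL]
  rcases Nat.eq_zero_or_pos n with rfl | hn
  · simp [hE0]
  have hprev : (∑ k ∈ range n, binomWeight p q n k * E k) * L
      ≤ ∑ k ∈ range n, binomWeight p q n k * log ((k : ℝ) + 1) := by
    rw [sum_mul]
    refine sum_le_sum fun k hk => ?_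
    have := mul_le_mul_of_nonneg_left ((le_div_iff₀ hL).1 (ih k (mem_range.1 hk)))
      (binomWeight_nonneg hp.le hq n k)
    linarith
  have hjensen := sum_binomWeight_mul_log_succ_le hp.le hq hpq n
  rw [sum_range_succ, binomWeight_self] at hjensen
  have hlog := log_two_div_one_add_add_log_le hq hq1.le (Nat.one_le_cast.2 hn)
  have hgap : 0 < 1 - q ^ n := sub_pos.2 (pow_lt_one₀ hq hq1 hn.ne')
  refine le_of_mul_le_mul_left ?_ hgap
  calc (1 - q ^ n) * (E n * L) = L + (∑ k ∈ range n, binomWeight p q n k * E k) * L := by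
        rw [← mul_assoc, hrec n hn]; ring
    _ ≤ (1 - q ^ n) * log ((n : ℝ) + 1) := by linarith

end Recurrence

open Finset in
/-- Hub propagation time is `Θ(log(n+1))`:
`q·log(n+1) ≤ E n ≤ log(n+1)/log(2/(1+q))` for all `n`. -/
theorem hub_theta_log (p : ℝ) (hp0 : 0 < p) (hp1 : p < 1) (q : ℝ) (hq : q = 1 - p)
    (E : ℕ → ℝ) (hE0 : E 0 = 0)
    (hrec : ∀ n : ℕ, 1 ≤ n →
      (1 - q ^ n) * E n =
        1 + ∑ k ∈ range n, (n.choose k : ℝ) * p ^ (n - k) * q ^ k * E k) :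
    ∀ n : ℕ, q * Real.log ((n : ℝ) + 1) ≤ E n ∧
      E n ≤ Real.log ((n : ℝ) + 1) / Real.log (2 / (1 + q)) := by
  have hpq : p + q = 1 := by rw [hq]; ring
  have hq0 : 0 < q := by linarith
  have hq1 : q < 1 := by linarith
  exact fun n => ⟨mul_log_succ_le_of_rec hp0.le hq0 hq1 hpq hE0 hrec n,
    le_log_succ_div_of_rec hp0 hq0.le hpq hE0 hrec n⟩
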